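/- Let n ≥ 1, let A, B ∈ ℙ_n, and let t ∈ ℝ. Then the system of equations A = X^{-t} Y X^{-t} and B = X^{1−t} Y X^{1−t} has a unique solution (X, Y) ∈ ℙ_n × ℙ_n, namely (X, Y) = (A^{-1} # B, A ♮_t B). -/

import Mathlib

open Matrix
open scoped ComplexOrder

/-- Real power `A^t = exp(t · log A)` of a Hermitian positive definite matrix, defined via
the functional calculus (spectral decomposition). -/
noncomputable def mpow {n : ℕ} (A : Matrix (Fin n) (Fin n) ℂ) (t : ℝ) :
    Matrix (Fin n) (Fin n) ℂ :=
  if hA : A.IsHermitian then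
    (hA.eigenvectorUnitary : Matrix (Fin n) (Fin n) ℂ) *
      Matrix.diagonal (fun i => ((hA.eigenvalues i ^ t : ℝ) : ℂ)) *
      (star (hA.eigenvectorUnitary : Matrix (Fin n) (Fin n) ℂ))
  else A

/-- Logarithm of a Hermitian positive definite matrix via the functional calculus. -/
noncomputable def mlog {n : ℕ} (A : Matrix (Fin n) (Fin n) ℂ) : Matrix (Fin n) (Fin n) ℂ :=
  if hA : A.IsHermitian then
    (hA.eigenvectorUnitary : Matrix (Fin n) (Fin n) ℂ) *
      Matrix.diagonal (fun i => ((Real.log (hA.eigenvalues i) : ℝ) : ℂ)) *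
      (star (hA.eigenvectorUnitary : Matrix (Fin n) (Fin n) ℂ))
  else A

/-- Metric geometric mean `A # B = A^{1/2} (A^{-1/2} B A^{-1/2})^{1/2} A^{1/2}`. -/
noncomputable def geomMean {n : ℕ} (A B : Matrix (Fin n) (Fin n) ℂ) :
    Matrix (Fin n) (Fin n) ℂ :=
  mpow A (1/2) * mpow (mpow A (-(1/2)) * B * mpow A (-(1/2))) (1/2) * mpow A (1/2)

/-- Weighted spectral geometric mean `A ♮_t B = (A⁻¹ # B)^t A (A⁻¹ # B)^t`. -/
noncomputable def spectralMean {n : ℕ} (t : ℝ) (A B : Matrix (Fin n) (Fin n) ℂ) :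
    Matrix (Fin n) (Fin n) ℂ :=
  mpow (geomMean A⁻¹ B) t * A * mpow (geomMean A⁻¹ B) t

/-!
For positive definite `P` the spectral power `mpow P t` is the continuous functional calculus
power `P ^ t`, so `t ↦ mpow P t` is a one-parameter group of positive definite matrices.
Conjugating `A = X^{-t} Y X^{-t}` by `X^t` gives `Y = X^t A X^t`, and substituting this into the
second equation leaves the Riccati equation `X A X = B`. With `D = A^{1/2}` that equation reads
`(D X D)² = D B D`, so uniqueness of positive square roots forces `X = A⁻¹ # B`.
-/

open scoped MatrixOrder

section

variable {n : ℕ} {P B M X : Matrix (Fin n) (Fin n) ℂ}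

lemma mpow_eq_rpow (hP : P.PosDef) (t : ℝ) : mpow P t = P ^ t := by
  rw [CFC.rpow_eq_cfc_real hP.posSemidef.nonneg, hP.1.cfc_eq, mpow, dif_pos hP.1,
    IsHermitian.cfc, Unitary.conjStarAlgAut_apply]
  rfl

lemma posDef_mpow (hP : P.PosDef) (t : ℝ) : (mpow P t).PosDef := by
  rw [mpow_eq_rpow hP]
  exact (hP.isStrictlyPositive.rpow P t).posDef

lemma mpow_add (hP : P.PosDef) (s t : ℝ) : mpow P (s + t) = mpow P s * mpow P t := by
  simp only [mpow_eq_rpow hP]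
  exact CFC.rpow_add hP.isUnit

lemma mpow_zero (hP : P.PosDef) : mpow P 0 = 1 := by
  rw [mpow_eq_rpow hP, CFC.rpow_zero P hP.posSemidef.nonneg]

lemma mpow_one (hP : P.PosDef) : mpow P 1 = P := by
  rw [mpow_eq_rpow hP, CFC.rpow_one P hP.posSemidef.nonneg]

lemma mpow_neg_one (hP : P.PosDef) : mpow P (-1) = P⁻¹ := by
  have h : mpow P (-1) * mpow P 1 = 1 := by rw [← mpow_add hP, neg_add_cancel, mpow_zero hP]
  rw [mpow_one hP] at h
  exact (inv_eq_left_inv h).symm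

lemma mpow_half_mul_mpow_half (hP : P.PosDef) : mpow P (1 / 2) * mpow P (1 / 2) = P := by
  rw [← mpow_add hP, add_halves, mpow_one hP]

lemma mpow_mul_mul_mpow_conj (hP : P.PosDef) (r s : ℝ) (M : Matrix (Fin n) (Fin n) ℂ) :
    mpow P r * (mpow P s * M * mpow P s) * mpow P r = mpow P (r + s) * M * mpow P (r + s) := by
  nth_rewrite 2 [add_comm]
  rw [mpow_add hP, mpow_add hP]
  simp only [mul_assoc]

lemma mpow_mul_mul_mpow_conj_of_add_eq_zero (hP : P.PosDef) {r s : ℝ} (hrs : r + s = 0)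
    (M : Matrix (Fin n) (Fin n) ℂ) : mpow P r * (mpow P s * M * mpow P s) * mpow P r = M := by
  rw [mpow_mul_mul_mpow_conj hP, hrs, mpow_zero hP, one_mul, mul_one]

lemma posDef_mpow_mul_mul_mpow (hP : P.PosDef) (hM : M.PosDef) (t : ℝ) :
    (mpow P t * M * mpow P t).PosDef := by
  have hPt := posDef_mpow hP t
  have h := hPt.isUnit.posDef_star_right_conjugate_iff.mpr hM
  rwa [star_eq_conjTranspose, hPt.1.eq] at h

lemma eq_mpow_half_of_mul_self_eq (hX : X.PosDef) (hM : M.PosDef) (h : X * X = M) :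
    X = mpow M (1 / 2) := by
  refine (CFC.sq_eq_sq_iff X _ hX.posSemidef.nonneg (posDef_mpow hM _).posSemidef.nonneg).mp ?_
  rw [sq, sq, h, mpow_half_mul_mpow_half hM]

lemma mpow_neg_half_mul_mpow_neg_half (hP : P.PosDef) :
    mpow P (-(1 / 2)) * mpow P (-(1 / 2)) = P⁻¹ := by
  rw [← mpow_add hP, ← mpow_neg_one hP]
  norm_num

lemma posDef_geomMean (hP : P.PosDef) (hB : B.PosDef) : (geomMean P B).PosDef :=
  posDef_mpow_mul_mul_mpow hP (posDef_mpow (posDef_mpow_mul_mul_mpow hP hB _) _) _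

lemma geomMean_mul_inv_mul_geomMean (hP : P.PosDef) (hB : B.PosDef) :
    geomMean P B * P⁻¹ * geomMean P B = B := by
  have hSS := mpow_half_mul_mpow_half (posDef_mpow_mul_mul_mpow hP hB (-(1 / 2)))
  rw [geomMean, ← mpow_neg_half_mul_mpow_neg_half hP]
  set C := mpow P (1 / 2)
  set D := mpow P (-(1 / 2))
  set S := mpow (D * B * D) (1 / 2)
  have hCD : C * D = 1 := by rw [← mpow_add hP, add_neg_cancel, mpow_zero hP]
  have hDC : D * C = 1 := by rw [← mpow_add hP, neg_add_cancel, mpow_zero hP]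
  calc C * S * C * (D * D) * (C * S * C) = C * S * (C * D) * (D * C) * S * C := by
        simp only [mul_assoc]
    _ = C * (D * B * D) * C := by
        rw [hCD, hDC, ← hSS]
        simp only [mul_one, mul_assoc]
    _ = B := mpow_mul_mul_mpow_conj_of_add_eq_zero hP (add_neg_cancel _) B

lemma eq_geomMean_of_mul_inv_mul_eq (hP : P.PosDef) (hB : B.PosDef) (hX : X.PosDef)
    (h : X * P⁻¹ * X = B) : X = geomMean P B := by
  rw [← mpow_neg_half_mul_mpow_neg_half hP] at h
  set D := mpow P (-(1 / 2))
  have hT : D * X * D = mpow (D * B * D) (1 / 2) := by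
    refine eq_mpow_half_of_mul_self_eq (posDef_mpow_mul_mul_mpow hP hX _)
      (posDef_mpow_mul_mul_mpow hP hB _) ?_
    rw [← h]
    simp only [mul_assoc]
  rw [geomMean, ← hT, mpow_mul_mul_mpow_conj_of_add_eq_zero hP (add_neg_cancel _)]

end

theorem system_unique_solution {n : ℕ} (A B : Matrix (Fin n) (Fin n) ℂ)
    (hA : A.PosDef) (hB : B.PosDef) (t : ℝ) :
    (geomMean A⁻¹ B).PosDef ∧ (spectralMean t A B).PosDef ∧
    A = mpow (geomMean A⁻¹ B) (-t) * spectralMean t A B * mpow (geomMean A⁻¹ B) (-t) ∧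
    B = mpow (geomMean A⁻¹ B) (1 - t) * spectralMean t A B * mpow (geomMean A⁻¹ B) (1 - t) ∧
    ∀ X Y : Matrix (Fin n) (Fin n) ℂ, X.PosDef → Y.PosDef →
      A = mpow X (-t) * Y * mpow X (-t) → B = mpow X (1 - t) * Y * mpow X (1 - t) →
      X = geomMean A⁻¹ B ∧ Y = spectralMean t A B := by
  have hA_inv_inv : A⁻¹⁻¹ = A :=
    nonsing_inv_nonsing_inv A ((isUnit_iff_isUnit_det A).mp hA.isUnit)
  set G := geomMean A⁻¹ B
  have hG : G.PosDef := posDef_geomMean hA.inv hB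
  have hGAG : G * A * G = B := by
    simpa only [hA_inv_inv] using geomMean_mul_inv_mul_geomMean hA.inv hB
  refine ⟨hG, posDef_mpow_mul_mul_mpow hG hA t,
    (mpow_mul_mul_mpow_conj_of_add_eq_zero hG (neg_add_cancel t) A).symm, ?_, ?_⟩
  · rw [spectralMean, mpow_mul_mul_mpow_conj hG, sub_add_cancel, mpow_one hG, hGAG]
  · intro X Y hX _ hAXY hBXY
    have hY : Y = mpow X t * A * mpow X t := by
      rw [hAXY, mpow_mul_mul_mpow_conj_of_add_eq_zero hX (add_neg_cancel t)]
    have hXG : X = G := by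
      refine eq_geomMean_of_mul_inv_mul_eq hA.inv hB hX ?_
      rw [hA_inv_inv, hBXY, hY, mpow_mul_mul_mpow_conj hX, sub_add_cancel, mpow_one hX]
    exact ⟨hXG, by rw [hY, hXG]; rfl⟩
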